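/- For every k ≥ 2 and every n with n ≤ 2k, there exists a graph G such that TS_k(G) is a tree containing the star K_{1,n} as an induced subgraph. -/

import Mathlib

/-!
Let `G` be the complement of a "compatibility" graph `H` on `k` cores `core i`, two tips
`tip false i`, `tip true i` for each core, and pendants `pend i j` (`i ≠ j`): the cores are pairwise
compatible, the two tips of `i` are compatible with each other and with every core but `core i`,
and `pend i j` is compatible with `tip true i` and with every core but `core i` and `core j`.
The vertices of `TS_k(G)` are the `k`-cliques of `H`, namely the set `C` of all cores and, for
`i ≠ j`, the sets `C - core i + tip s i`, `C - core i - core j + tip true i + pend i j` and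
`C - core i - core j + tip false i + tip true i`. A token slide only ever joins one of these sets
to the previous one in this list (with the same indices), so every vertex but `C` has exactly one
neighbour of smaller weight and `TS_k(G)` is a tree. Its vertex `C` has the `2k` neighbours
`C - core i + tip s i`, and in a tree any set of neighbours of a vertex spans an induced star.
-/

open SimpleGraph

/-- `I` is a size-`k` independent set of `G`: a vertex of the token sliding graph. -/
def TSVert {W : Type*} (G : SimpleGraph W) (k : ℕ) (I : Finset W) : Prop :=
  I.card = k ∧ ∀ u ∈ I, ∀ v ∈ I, ¬ G.Adj u v

/-- The token sliding graph `TS_k(G)`: vertices are size-`k` independent sets of `G`,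
two sets adjacent iff they differ by sliding one token along an edge of `G`. -/
def TS {W : Type*} (G : SimpleGraph W) (k : ℕ) :
    SimpleGraph {I : Finset W // TSVert G k I} :=
  SimpleGraph.fromRel fun I J =>
    ∃ u v, ((I : Finset W) : Set W) \ ((J : Finset W) : Set W) = {u} ∧
      ((J : Finset W) : Set W) \ ((I : Finset W) : Set W) = {v} ∧ G.Adj u v

/-- `2K₂`: two disjoint edges, `0-1` and `2-3`. -/
def twoK2 : SimpleGraph (Fin 4) :=
  SimpleGraph.fromRel fun a b => (a = 0 ∧ b = 1) ∨ (a = 2 ∧ b = 3)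

/-- Disjoint union of two simple graphs. -/
def disjUnion' {α β : Type*} (G : SimpleGraph α) (H : SimpleGraph β) :
    SimpleGraph (α ⊕ β) :=
  SimpleGraph.fromRel fun a b =>
    (∃ x y, a = Sum.inl x ∧ b = Sum.inl y ∧ G.Adj x y) ∨
    (∃ x y, a = Sum.inr x ∧ b = Sum.inr y ∧ H.Adj x y)

/-- `nK₁`: `n` isolated vertices. -/
def nK1 (n : ℕ) : SimpleGraph (Fin n) := ⊥

/-- `D r n s`: the tree obtained from the path on `n` vertices by appending `r` leaves
at one endpoint and `s` leaves at the other endpoint. -/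
def D (r n s : ℕ) : SimpleGraph (Fin r ⊕ Fin n ⊕ Fin s) :=
  SimpleGraph.fromRel fun a b =>
    (∃ i j : Fin n, a = Sum.inr (Sum.inl i) ∧ b = Sum.inr (Sum.inl j) ∧ (j : ℕ) = (i : ℕ) + 1) ∨
    (∃ (u : Fin r) (i : Fin n), a = Sum.inl u ∧ b = Sum.inr (Sum.inl i) ∧ (i : ℕ) = 0) ∨
    (∃ (v : Fin s) (i : Fin n), a = Sum.inr (Sum.inr v) ∧ b = Sum.inr (Sum.inl i) ∧ (i : ℕ) = n - 1)

/-- The star `K_{1,s}`: center `0` with `s` leaves. -/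
def star' (s : ℕ) : SimpleGraph (Fin (s + 1)) :=
  SimpleGraph.fromRel fun a _ => a = 0

/-- `G` contains a cycle of length `n`. -/
def HasCycleLen {α : Type*} (G : SimpleGraph α) (n : ℕ) : Prop :=
  ∃ (v : α) (w : G.Walk v v), w.IsCycle ∧ w.length = n

/-- `G` contains a cycle. -/
def HasCycle {α : Type*} (G : SimpleGraph α) : Prop :=
  ∃ (v : α) (w : G.Walk v v), w.IsCycle

namespace SimpleGraph

theorem isTree_of_parent {V : Type*} {G : SimpleGraph V} (P : V → V → Prop) (f : V → ℕ) (r : V)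
    (hf : ∀ ⦃a b⦄, P a b → f a < f b) (huniq : ∀ ⦃a a' b⦄, P a b → P a' b → a = a')
    (hex : ∀ b, b ≠ r → ∃ a, P a b) (hadj : ∀ a b, G.Adj a b ↔ P a b ∨ P b a) :
    G.IsTree := by
  have hreach (v : V) : G.Reachable v r := by
    induction hv : f v using Nat.strong_induction_on generalizing v with
    | _ n ih =>
      by_cases hvr : v = r
      · rw [hvr]
      · obtain ⟨a, ha⟩ := hex v hvr
        exact ((hadj v a).2 (.inr ha)).reachable.trans (ih _ (hv ▸ hf ha) a rfl)
  have : Nonempty V := ⟨r⟩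
  refine ⟨⟨fun u v => (hreach u).trans (hreach v).symm⟩, fun v c hc => ?_⟩
  classical
  -- A vertex of maximal rank on a cycle has two distinct cycle neighbours, both its parents.
  obtain ⟨u, hu, hmax⟩ := c.support.toFinset.exists_max_image f ⟨v, by simp⟩
  obtain ⟨x, y, hxy, hnb⟩ := Set.ncard_eq_two.mp
    (hc.ncard_neighborSet_toSubgraph_eq_two (List.mem_toFinset.mp hu))
  have hparent : ∀ w ∈ c.toSubgraph.neighborSet u, P w u := by
    intro w hw
    have hw' : w ∈ c.support := c.mem_verts_toSubgraph.mp (c.toSubgraph.edge_vert hw.symm)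
    refine ((hadj w u).1 (c.toSubgraph.adj_sub hw).symm).resolve_right fun h => ?_
    exact absurd (hmax w (List.mem_toFinset.mpr hw')) (not_le.mpr (hf h))
  exact hxy (huniq (hparent x (by simp [hnb])) (hparent y (by simp [hnb])))

theorem IsAcyclic.nonempty_star'_embedding {V : Type*} {G : SimpleGraph V} (hG : G.IsAcyclic)
    {n : ℕ} (c : V) (f : Fin n ↪ V) (hf : ∀ i, G.Adj c (f i)) : Nonempty (star' n ↪g G) := by
  classical
  refine ⟨⟨⟨Fin.cons c f, Fin.cons_injective_iff.mpr
    ⟨fun ⟨i, hi⟩ => (hf i).ne hi.symm, f.injective⟩⟩, fun {a b} => ?_⟩⟩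
  simp only [star', fromRel_adj, Function.Embedding.coeFn_mk]
  induction a using Fin.cases <;> induction b using Fin.cases
  · simp
  · simp [hf, (Fin.succ_ne_zero _).symm]
  · simp [(hf _).symm, Fin.succ_ne_zero]
  · rename_i i j
    simp only [Fin.cons_succ, ne_eq, Fin.succ_inj, Fin.succ_ne_zero, or_self, and_false,
      iff_false]
    exact fun hij => hG.cliqueFree le_rfl _ (is3Clique_triple_iff.mpr ⟨hf i, hf j, hij⟩)

end SimpleGraph

theorem ts_adj_iff {W : Type*} {G : SimpleGraph W} {k : ℕ} {I J : {I : Finset W // TSVert G k I}} :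
    (TS G k).Adj I J ↔ ∃ u v, ((I : Finset W) : Set W) \ (J : Finset W) = {u} ∧
      ((J : Finset W) : Set W) \ (I : Finset W) = {v} ∧ G.Adj u v := by
  refine ⟨fun ⟨_, h⟩ => h.elim id fun ⟨u, v, hu, hv, huv⟩ => ⟨v, u, hv, hu, huv.symm⟩,
    fun ⟨u, v, hu, hv, huv⟩ => ⟨?_, .inl ⟨u, v, hu, hv, huv⟩⟩⟩
  rintro rfl
  simp at hu

theorem tsVert_compl_iff {W : Type*} {H : SimpleGraph W} {k : ℕ} {I : Finset W} :
    TSVert Hᶜ k I ↔ H.IsNClique k I := by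
  simp [TSVert, isNClique_iff, IsClique, Set.Pairwise, and_comm]

theorem tsVert_map_iff {V W : Type*} {G : SimpleGraph V} {G' : SimpleGraph W} (φ : G ≃g G')
    (k : ℕ) (I : Finset V) : TSVert G' k (I.map φ.toEquiv.toEmbedding) ↔ TSVert G k I := by
  simp only [TSVert, Finset.card_map, Finset.forall_mem_map, Equiv.coe_toEmbedding,
    RelIso.coe_fn_toEquiv, φ.map_adj_iff]

def tsCongr {V W : Type*} {G : SimpleGraph V} {G' : SimpleGraph W} (φ : G ≃g G') (k : ℕ) :
    TS G k ≃g TS G' k where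
  toFun I := ⟨I.1.map φ.toEquiv.toEmbedding, (tsVert_map_iff φ k I).2 I.2⟩
  invFun I := ⟨I.1.map φ.symm.toEquiv.toEmbedding, (tsVert_map_iff φ.symm k I).2 I.2⟩
  left_inv I := Subtype.ext (by simp [Finset.map_map])
  right_inv I := Subtype.ext (by simp [Finset.map_map])
  map_rel_iff' {I J} := by
    simp only [ts_adj_iff]
    rw [← φ.toEquiv.exists_congr_right]
    refine exists_congr fun u => ?_
    rw [← φ.toEquiv.exists_congr_right]
    refine exists_congr fun v => ?_
    simp only [Equiv.coe_fn_mk, Finset.coe_map, Equiv.coe_toEmbedding, RelIso.coe_fn_toEquiv]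
    rw [← Set.image_sdiff φ.injective, ← Set.image_sdiff φ.injective, ← Set.image_singleton,
      ← Set.image_singleton, Set.image_eq_image φ.injective, Set.image_eq_image φ.injective,
      φ.map_adj_iff]

section Slide

variable {W : Type*} [DecidableEq W]

def IsSlide (G : SimpleGraph W) (I J : Finset W) : Prop :=
  ∃ u v, I \ J = {u} ∧ J \ I = {v} ∧ G.Adj u v

variable {G : SimpleGraph W} {I J : Finset W}

theorem ts_adj_iff_isSlide {k : ℕ} {I J : {I : Finset W // TSVert G k I}} :
    (TS G k).Adj I J ↔ IsSlide G I.1 J.1 := by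
  simp only [ts_adj_iff, IsSlide, ← Finset.coe_sdiff, ← Finset.coe_singleton, Finset.coe_inj]

theorem IsSlide.symm (h : IsSlide G I J) : IsSlide G J I :=
  let ⟨u, v, hu, hv, huv⟩ := h
  ⟨v, u, hv, hu, huv.symm⟩

theorem not_isSlide_self : ¬ IsSlide G I I := by
  rintro ⟨u, -, hu, -⟩
  simp at hu

theorem IsSlide.eq_of_mem (h : IsSlide G I J) {x y : W} (hx : x ∈ I) (hx' : x ∉ J) (hy : y ∈ I)
    (hy' : y ∉ J) : x = y := by
  obtain ⟨u, v, hu, -⟩ := h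
  have hxu : x ∈ I \ J := Finset.mem_sdiff.2 ⟨hx, hx'⟩
  have hyu : y ∈ I \ J := Finset.mem_sdiff.2 ⟨hy, hy'⟩
  rw [hu, Finset.mem_singleton] at hxu hyu
  rw [hxu, hyu]

theorem IsSlide.adj_of_mem (h : IsSlide G I J) {x y : W} (hx : x ∈ I) (hx' : x ∉ J) (hy : y ∈ J)
    (hy' : y ∉ I) : G.Adj x y := by
  obtain ⟨u, v, hu, hv, huv⟩ := h
  have hxu : x ∈ I \ J := Finset.mem_sdiff.2 ⟨hx, hx'⟩
  have hyv : y ∈ J \ I := Finset.mem_sdiff.2 ⟨hy, hy'⟩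
  rw [hu, Finset.mem_singleton] at hxu
  rw [hv, Finset.mem_singleton] at hyv
  rwa [hxu, hyv]

end Slide

namespace TokenTree

abbrev Site (k : ℕ) := Fin k ⊕ (Bool × Fin k) ⊕ (Fin k × Fin k)

variable {k : ℕ}

abbrev core (i : Fin k) : Site k := .inl i
abbrev tip (s : Bool) (i : Fin k) : Site k := .inr (.inl (s, i))
abbrev pend (i j : Fin k) : Site k := .inr (.inr (i, j))

/-- `pend i i` is compatible with nothing, so it lies in no clique of size at least `2`. -/
@[simp] def Compat : Site k → Site k → Prop
  | .inl _, .inl _ => True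
  | .inl l, .inr (.inl (_, i)) | .inr (.inl (_, i)), .inl l => l ≠ i
  | .inl l, .inr (.inr (i, j)) | .inr (.inr (i, j)), .inl l => i ≠ j ∧ l ≠ i ∧ l ≠ j
  | .inr (.inl (_, i)), .inr (.inl (_, j)) => i = j
  | .inr (.inl (s, l)), .inr (.inr (i, j)) | .inr (.inr (i, j)), .inr (.inl (s, l)) =>
      i ≠ j ∧ s = true ∧ l = i
  | .inr (.inr _), .inr (.inr _) => False

theorem compat_comm {x y : Site k} : Compat x y ↔ Compat y x := by
  rcases x with _ | ⟨_, _⟩ | ⟨_, _⟩ <;> rcases y with _ | ⟨_, _⟩ | ⟨_, _⟩ <;> grind [Compat]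

def compatGraph (k : ℕ) : SimpleGraph (Site k) where
  Adj x y := x ≠ y ∧ Compat x y
  symm := ⟨fun _ _ h => ⟨h.1.symm, compat_comm.1 h.2⟩⟩
  loopless := ⟨fun _ h => h.1 rfl⟩

@[simp] theorem compatGraph_adj {x y : Site k} :
    (compatGraph k).Adj x y ↔ x ≠ y ∧ Compat x y :=
  Iff.rfl

def tokenGraph (k : ℕ) : SimpleGraph (Site k) := (compatGraph k)ᶜ

@[simp] theorem tokenGraph_adj {x y : Site k} :
    (tokenGraph k).Adj x y ↔ x ≠ y ∧ ¬ Compat x y :=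
  (compl_adj _ _ _).trans (and_congr_right fun h => not_congr (and_iff_right h))

theorem tsVert_tokenGraph_iff {I : Finset (Site k)} :
    TSVert (tokenGraph k) k I ↔ (compatGraph k).IsNClique k I :=
  tsVert_compl_iff

def coreExcept (M : Finset (Fin k)) : Finset (Site k) := Mᶜ.map .inl

def tipSet (s : Bool) (i : Fin k) : Finset (Site k) := insert (tip s i) (coreExcept {i})

def pendSet (i j : Fin k) : Finset (Site k) :=
  insert (tip true i) (insert (pend i j) (coreExcept {i, j}))

def twinSet (i j : Fin k) : Finset (Site k) :=
  insert (tip false i) (insert (tip true i) (coreExcept {i, j}))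

@[simp] theorem core_mem_coreExcept {M : Finset (Fin k)} {l : Fin k} :
    core l ∈ coreExcept M ↔ l ∉ M := by
  simp [coreExcept]

@[simp] theorem tip_notMem_coreExcept {M : Finset (Fin k)} {s : Bool} {i : Fin k} :
    tip s i ∉ coreExcept M := by
  simp [coreExcept]

@[simp] theorem pend_notMem_coreExcept {M : Finset (Fin k)} {i j : Fin k} :
    pend i j ∉ coreExcept M := by
  simp [coreExcept]

theorem card_coreExcept (M : Finset (Fin k)) : (coreExcept M).card = k - M.card := by
  simp [coreExcept, Finset.card_compl]

theorem card_tipSet (s : Bool) (i : Fin k) : (tipSet s i).card = k := by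
  rw [tipSet, Finset.card_insert_of_notMem tip_notMem_coreExcept, card_coreExcept,
    Finset.card_singleton]
  have := i.pos
  omega

theorem card_pendSet {i j : Fin k} (hij : i ≠ j) : (pendSet i j).card = k := by
  rw [pendSet, Finset.card_insert_of_notMem (by simp), Finset.card_insert_of_notMem (by simp),
    card_coreExcept, Finset.card_pair hij]
  have := Fin.nontrivial_iff_two_le.1 ⟨⟨i, j, hij⟩⟩
  omega

theorem card_twinSet {i j : Fin k} (hij : i ≠ j) : (twinSet i j).card = k := by
  rw [twinSet, Finset.card_insert_of_notMem (by simp), Finset.card_insert_of_notMem (by simp),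
    card_coreExcept, Finset.card_pair hij]
  have := Fin.nontrivial_iff_two_le.1 ⟨⟨i, j, hij⟩⟩
  omega

theorem isClique_iff {I : Finset (Site k)} :
    (compatGraph k).IsClique (I : Set (Site k)) ↔ ∀ x ∈ I, ∀ y ∈ I, x ≠ y → Compat x y := by
  simp [IsClique, Set.Pairwise]

theorem isNClique_coreExcept_empty : (compatGraph k).IsNClique k (coreExcept ∅) :=
  ⟨isClique_iff.2 (by simp), by simp [card_coreExcept]⟩

theorem isNClique_tipSet (s : Bool) (i : Fin k) : (compatGraph k).IsNClique k (tipSet s i) :=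
  ⟨isClique_iff.2 (by simp [tipSet]), card_tipSet s i⟩

theorem isNClique_pendSet {i j : Fin k} (hij : i ≠ j) :
    (compatGraph k).IsNClique k (pendSet i j) :=
  ⟨isClique_iff.2 (by simp [pendSet]; grind), card_pendSet hij⟩

variable {I : Finset (Site k)}

theorem compat_of_mem (hI : (compatGraph k).IsNClique k I) {x y : Site k} (hx : x ∈ I)
    (hy : y ∈ I) (hxy : x ≠ y) : Compat x y :=
  (hI.isClique hx hy hxy).2

theorem eq_pendSet_of_pend_mem (hk : 2 ≤ k) (hI : (compatGraph k).IsNClique k I) {i j : Fin k}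
    (h : pend i j ∈ I) : i ≠ j ∧ I = pendSet i j := by
  have hij : i ≠ j := by
    obtain ⟨y, hy, hne⟩ := I.exists_mem_ne (by rw [hI.card_eq]; omega) (pend i j)
    have := compat_of_mem hI hy h hne
    rcases y with _ | ⟨_, _⟩ | ⟨_, _⟩ <;> simp_all
  refine ⟨hij, Finset.eq_of_subset_of_card_le (fun y hy => ?_)
    (by rw [card_pendSet hij, hI.card_eq])⟩
  by_cases hne : y = pend i j
  · simp [pendSet, hne]
  have := compat_of_mem hI hy h hne
  rcases y with _ | ⟨_, _⟩ | ⟨_, _⟩ <;> simp_all [pendSet]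

theorem eq_twinSet_of_tips_mem (hI : (compatGraph k).IsNClique k I) {i : Fin k}
    (h₀ : tip false i ∈ I) (h₁ : tip true i ∈ I) : ∃ j, i ≠ j ∧ I = twinSet i j := by
  set T := insert (tip false i) (insert (tip true i) (coreExcept {i})) with hT
  have hIT : I ⊆ T := fun y hy => by
    by_cases hne : y = tip false i
    · simp [hT, hne]
    have := compat_of_mem hI hy h₀ hne
    rcases y with _ | ⟨_ | _, _⟩ | ⟨_, _⟩ <;> simp_all
  have hcardT : T.card = k + 1 := by
    rw [hT, Finset.card_insert_of_notMem (by simp), Finset.card_insert_of_notMem (by simp),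
      card_coreExcept, Finset.card_singleton]
    have := i.pos
    omega
  obtain ⟨y, hyT, hyI⟩ := Finset.not_subset.mp fun hTI : T ⊆ I => by
    have := Finset.card_le_card hTI
    rw [hcardT, hI.card_eq] at this
    omega
  obtain ⟨j, rfl, hij⟩ : ∃ j, y = core j ∧ i ≠ j := by
    rcases y with j | ⟨_ | _, _⟩ | ⟨_, _⟩ <;> simp_all [eq_comm]
  refine ⟨j, hij, Finset.eq_of_subset_of_card_le (fun x hx => ?_)
    (by rw [card_twinSet hij, hI.card_eq])⟩
  have hxT := hIT hx
  have hxj : x ≠ core j := fun h => hyI (h ▸ hx)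
  rcases x with _ | ⟨_, _⟩ | ⟨_, _⟩ <;> simp_all [twinSet]

theorem eq_tipSet_of_tip_mem (hI : (compatGraph k).IsNClique k I) {s : Bool} {i : Fin k}
    (h : tip s i ∈ I) (htip : tip (!s) i ∉ I) (hpend : ∀ l m, pend l m ∉ I) :
    I = tipSet s i := by
  refine Finset.eq_of_subset_of_card_le (fun y hy => ?_) (by rw [card_tipSet, hI.card_eq])
  by_cases hne : y = tip s i
  · simp [tipSet, hne]
  have := compat_of_mem hI hy h hne
  rcases y with _ | ⟨t, _⟩ | ⟨_, _⟩
  · simp_all [tipSet]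
  · cases s <;> cases t <;> simp_all
  · exact absurd hy (hpend _ _)

theorem eq_coreExcept_empty (hI : (compatGraph k).IsNClique k I)
    (htip : ∀ s i, tip s i ∉ I) (hpend : ∀ l m, pend l m ∉ I) : I = coreExcept ∅ := by
  refine Finset.eq_of_subset_of_card_le (fun y hy => ?_) (by simp [card_coreExcept, hI.card_eq])
  rcases y with _ | ⟨_, _⟩ | ⟨_, _⟩
  · simp
  · exact absurd hy (htip _ _)
  · exact absurd hy (hpend _ _)

inductive IsParent : Finset (Site k) → Finset (Site k) → Prop
  | core_tip (s : Bool) (i : Fin k) : IsParent (coreExcept ∅) (tipSet s i)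
  | tip_pend {i j : Fin k} (hij : i ≠ j) : IsParent (tipSet true i) (pendSet i j)
  | pend_twin {i j : Fin k} (hij : i ≠ j) : IsParent (pendSet i j) (twinSet i j)

theorem eq_coreExcept_empty_or_exists_isParent (hk : 2 ≤ k)
    (hI : (compatGraph k).IsNClique k I) : I = coreExcept ∅ ∨ ∃ A, IsParent A I := by
  by_cases hpend : ∃ l m, pend l m ∈ I
  · obtain ⟨l, m, h⟩ := hpend
    obtain ⟨hlm, rfl⟩ := eq_pendSet_of_pend_mem hk hI h
    exact .inr ⟨_, .tip_pend hlm⟩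
  push Not at hpend
  by_cases htip : ∃ s i, tip s i ∈ I
  · obtain ⟨s, i, h⟩ := htip
    by_cases h' : tip (!s) i ∈ I
    · obtain ⟨j, hij, rfl⟩ := eq_twinSet_of_tips_mem hI (i := i)
        (by cases s <;> assumption) (by cases s <;> assumption)
      exact .inr ⟨_, .pend_twin hij⟩
    · rw [eq_tipSet_of_tip_mem hI h h' hpend]
      exact .inr ⟨_, .core_tip s i⟩
  push Not at htip
  exact .inl (eq_coreExcept_empty hI htip hpend)

theorem IsParent.isNClique {A B : Finset (Site k)} (h : IsParent A B) :
    (compatGraph k).IsNClique k A := by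
  cases h with
  | core_tip => exact isNClique_coreExcept_empty
  | tip_pend => exact isNClique_tipSet true _
  | pend_twin hij => exact isNClique_pendSet hij

theorem IsParent.unique {A A' B B' : Finset (Site k)} (h : IsParent A B) (h' : IsParent A' B')
    (hB : B = B') : A = A' := by
  have mem (x : Site k) : x ∈ B ↔ x ∈ B' := by rw [hB]
  cases h with
  | core_tip s i =>
    cases h' with
    | core_tip => rfl
    | @tip_pend l m _ => simpa [tipSet, pendSet] using mem (pend l m)
    | @pend_twin l m _ => simpa [tipSet, twinSet] using mem (tip (!s) l)
  | @tip_pend i j hij =>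
    cases h' with
    | core_tip => simpa [tipSet, pendSet] using mem (pend i j)
    | @tip_pend l m _ =>
      obtain ⟨rfl, -⟩ : i = l ∧ j = m := by simpa [pendSet] using mem (pend i j)
      rfl
    | @pend_twin l m _ => simpa [twinSet, pendSet] using mem (pend i j)
  | @pend_twin i j hij =>
    cases h' with
    | core_tip s => simpa [tipSet, twinSet] using mem (tip (!s) i)
    | @tip_pend l m _ => simpa [twinSet, pendSet] using mem (pend l m)
    | @pend_twin l m _ =>
      obtain rfl : i = l := by simpa [twinSet] using mem (tip false i)
      obtain rfl : j = m := by simpa [twinSet, hij.symm] using mem (core j)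
      rfl

def weight : Site k → ℕ
  | .inl _ => 0
  | .inr (.inl (false, _)) => 2
  | .inr (.inl (true, _)) => 1
  | .inr (.inr _) => 1

def rank (I : Finset (Site k)) : ℕ := ∑ x ∈ I, weight x

theorem IsParent.rank_lt {A B : Finset (Site k)} (h : IsParent A B) : rank A < rank B := by
  cases h with
  | core_tip s => cases s <;> simp [rank, tipSet, coreExcept, weight]
  | tip_pend => simp [rank, tipSet, pendSet, coreExcept, weight]
  | pend_twin => simp [rank, twinSet, pendSet, coreExcept, weight]

theorem IsParent.isSlide {A B : Finset (Site k)} (h : IsParent A B) :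
    IsSlide (tokenGraph k) A B := by
  cases h with
  | core_tip s i =>
    refine ⟨core i, tip s i, ?_, ?_, by simp⟩ <;> ext (_ | ⟨_, _⟩ | ⟨_, _⟩) <;>
      simp [tipSet, eq_comm]
  | @tip_pend i j hij =>
    refine ⟨core j, pend i j, ?_, ?_, by simp⟩ <;> ext (_ | ⟨_, _⟩ | ⟨_, _⟩) <;>
      simp [tipSet, pendSet] <;> grind
  | @pend_twin i j hij =>
    refine ⟨pend i j, tip false i, ?_, ?_, by simp⟩ <;> ext (_ | ⟨_, _⟩ | ⟨_, _⟩) <;>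
      simp [twinSet, pendSet] <;> grind

theorem not_isSlide_coreExcept_pendSet {i j : Fin k} (hij : i ≠ j) :
    ¬ IsSlide (tokenGraph k) (coreExcept ∅) (pendSet i j) := fun h => by
  simpa [hij] using h.eq_of_mem (x := core i) (y := core j) (by simp) (by simp [pendSet])
    (by simp) (by simp [pendSet])

theorem not_isSlide_coreExcept_twinSet {i j : Fin k} (hij : i ≠ j) :
    ¬ IsSlide (tokenGraph k) (coreExcept ∅) (twinSet i j) := fun h => by
  simpa [hij] using h.eq_of_mem (x := core i) (y := core j) (by simp) (by simp [twinSet])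
    (by simp) (by simp [twinSet])

theorem not_isSlide_tipSet_tipSet (s t : Bool) (i l : Fin k) :
    ¬ IsSlide (tokenGraph k) (tipSet s i) (tipSet t l) := fun h => by
  by_cases hil : i = l
  · subst hil
    by_cases hst : s = t
    · exact not_isSlide_self (hst ▸ h)
    · simpa using h.adj_of_mem (x := tip s i) (y := tip t i) (by simp [tipSet])
        (by simp [tipSet, hst]) (by simp [tipSet]) (by simp [tipSet, Ne.symm hst])
  · simpa using h.eq_of_mem (x := tip s i) (y := core l) (by simp [tipSet])
      (by simp [tipSet, hil]) (by simp [tipSet, Ne.symm hil]) (by simp [tipSet])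

theorem isParent_of_isSlide_tipSet_pendSet {s : Bool} {i l m : Fin k} (hlm : l ≠ m)
    (h : IsSlide (tokenGraph k) (tipSet s i) (pendSet l m)) :
    IsParent (tipSet s i) (pendSet l m) := by
  obtain ⟨rfl, rfl⟩ : s = true ∧ i = l := by
    by_contra hsi
    simpa using h.symm.eq_of_mem (x := tip true l) (y := pend l m) (by simp [pendSet])
      (by simp [tipSet]; grind) (by simp [pendSet]) (by simp [tipSet])
  exact .tip_pend hlm

theorem not_isSlide_tipSet_twinSet (s : Bool) {i l m : Fin k} (hlm : l ≠ m) :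
    ¬ IsSlide (tokenGraph k) (tipSet s i) (twinSet l m) := fun h => by
  by_cases hil : i = l
  · subst hil
    simpa [Ne.symm hlm] using h.adj_of_mem (x := core m) (y := tip (!s) i)
      (by simp [tipSet, Ne.symm hlm]) (by simp [twinSet]) (by cases s <;> simp [twinSet])
      (by simp [tipSet])
  · simpa using h.symm.eq_of_mem (x := tip (!s) l) (y := tip s l)
      (by cases s <;> simp [twinSet]) (by simp [tipSet]) (by cases s <;> simp [twinSet])
      (by simp [tipSet, Ne.symm hil])

theorem not_isSlide_pendSet_pendSet {i j l m : Fin k} (hlm : l ≠ m) :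
    ¬ IsSlide (tokenGraph k) (pendSet i j) (pendSet l m) := fun h => by
  by_cases hil : i = l
  · subst hil
    by_cases hjm : j = m
    · exact not_isSlide_self (hjm ▸ h)
    · simpa using h.eq_of_mem (x := pend i j) (y := core m) (by simp [pendSet])
        (by simp [pendSet, hjm]) (by simp [pendSet, Ne.symm hlm, Ne.symm hjm])
        (by simp [pendSet])
  · simpa using h.eq_of_mem (x := pend i j) (y := tip true i) (by simp [pendSet])
      (by simp [pendSet, hil]) (by simp [pendSet]) (by simp [pendSet, hil])

theorem isParent_of_isSlide_pendSet_twinSet {i j l m : Fin k} (hlm : l ≠ m)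
    (h : IsSlide (tokenGraph k) (pendSet i j) (twinSet l m)) :
    IsParent (pendSet i j) (twinSet l m) := by
  obtain rfl : i = l := by
    by_contra hil
    simpa using h.symm.eq_of_mem (x := tip false l) (y := tip true l) (by simp [twinSet])
      (by simp [pendSet]) (by simp [twinSet]) (by simp [pendSet, Ne.symm hil])
  obtain rfl : j = m := by
    by_contra hjm
    simpa using h.eq_of_mem (x := pend i j) (y := core m) (by simp [pendSet])
      (by simp [twinSet]) (by simp [pendSet, Ne.symm hlm, Ne.symm hjm]) (by simp [twinSet])
  exact .pend_twin hlm

theorem not_isSlide_twinSet_twinSet {i j l m : Fin k} (hij : i ≠ j) (hlm : l ≠ m) :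
    ¬ IsSlide (tokenGraph k) (twinSet i j) (twinSet l m) := fun h => by
  by_cases hil : i = l
  · subst hil
    by_cases hjm : j = m
    · exact not_isSlide_self (hjm ▸ h)
    · simpa [hjm] using h.adj_of_mem (x := core m) (y := core j)
        (by simp [twinSet, Ne.symm hlm, Ne.symm hjm]) (by simp [twinSet])
        (by simp [twinSet, Ne.symm hij, hjm]) (by simp [twinSet])
  · simpa using h.eq_of_mem (x := tip false i) (y := tip true i) (by simp [twinSet])
      (by simp [twinSet, hil]) (by simp [twinSet]) (by simp [twinSet, hil])

theorem isParent_or_isParent_of_isSlide (hk : 2 ≤ k) {A B : Finset (Site k)}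
    (hA : (compatGraph k).IsNClique k A) (hB : (compatGraph k).IsNClique k B)
    (h : IsSlide (tokenGraph k) A B) : IsParent A B ∨ IsParent B A := by
  rcases eq_coreExcept_empty_or_exists_isParent hk hA with
    rfl | ⟨_, ⟨s, i⟩ | @⟨i, j, hij⟩ | @⟨i, j, hij⟩⟩ <;>
  rcases eq_coreExcept_empty_or_exists_isParent hk hB with
    rfl | ⟨_, ⟨t, l⟩ | @⟨l, m, hlm⟩ | @⟨l, m, hlm⟩⟩
  · exact absurd h not_isSlide_self
  · exact .inl (.core_tip t l)
  · exact absurd h (not_isSlide_coreExcept_pendSet hlm)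
  · exact absurd h (not_isSlide_coreExcept_twinSet hlm)
  · exact .inr (.core_tip s i)
  · exact absurd h (not_isSlide_tipSet_tipSet s t i l)
  · exact .inl (isParent_of_isSlide_tipSet_pendSet hlm h)
  · exact absurd h (not_isSlide_tipSet_twinSet s hlm)
  · exact absurd h.symm (not_isSlide_coreExcept_pendSet hij)
  · exact .inr (isParent_of_isSlide_tipSet_pendSet hij h.symm)
  · exact absurd h (not_isSlide_pendSet_pendSet hlm)
  · exact .inl (isParent_of_isSlide_pendSet_twinSet hlm h)
  · exact absurd h.symm (not_isSlide_coreExcept_twinSet hij)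
  · exact absurd h.symm (not_isSlide_tipSet_twinSet t hij)
  · exact .inr (isParent_of_isSlide_pendSet_twinSet hij h.symm)
  · exact absurd h (not_isSlide_twinSet_twinSet hij hlm)

abbrev Vertex (k : ℕ) := {I : Finset (Site k) // TSVert (tokenGraph k) k I}

def root : Vertex k := ⟨coreExcept ∅, tsVert_tokenGraph_iff.2 isNClique_coreExcept_empty⟩

theorem isTree_ts_tokenGraph (hk : 2 ≤ k) : (TS (tokenGraph k) k).IsTree := by
  refine isTree_of_parent (fun A B : Vertex k => IsParent A.1 B.1) (fun A => rank A.1) root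
    (fun _ _ h => h.rank_lt) (fun _ _ _ h h' => Subtype.ext (h.unique h' rfl)) ?_ ?_
  · intro B hB
    rcases eq_coreExcept_empty_or_exists_isParent hk (tsVert_tokenGraph_iff.1 B.2) with
      h | ⟨A, hA⟩
    · exact absurd (Subtype.ext h) hB
    · exact ⟨⟨A, tsVert_tokenGraph_iff.2 hA.isNClique⟩, hA⟩
  · intro A B
    rw [ts_adj_iff_isSlide]
    exact ⟨isParent_or_isParent_of_isSlide hk (tsVert_tokenGraph_iff.1 A.2)
      (tsVert_tokenGraph_iff.1 B.2), fun h => h.elim IsParent.isSlide fun h => h.isSlide.symm⟩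

def tipVertex : Bool × Fin k ↪ Vertex k where
  toFun p := ⟨tipSet p.1 p.2, tsVert_tokenGraph_iff.2 (isNClique_tipSet p.1 p.2)⟩
  inj' p q h := by
    simpa [tipSet, Prod.ext_iff] using congrArg (tip p.1 p.2 ∈ ·.1) h

theorem root_adj_tipVertex (p : Bool × Fin k) : (TS (tokenGraph k) k).Adj root (tipVertex p) :=
  ts_adj_iff_isSlide.2 (IsParent.core_tip p.1 p.2).isSlide

end TokenTree

theorem stmt16 (k n : ℕ) (hk : 2 ≤ k) (hn : n ≤ 2 * k) :
    ∃ (m : ℕ) (G : SimpleGraph (Fin m)),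
      (TS G k).IsTree ∧ Nonempty (star' n ↪g TS G k) := by
  have hT := TokenTree.isTree_ts_tokenGraph hk
  obtain ⟨f⟩ : Nonempty (Fin n ↪ Bool × Fin k) :=
    Function.Embedding.nonempty_of_card_le (by simpa [mul_comm] using hn)
  obtain ⟨ψ⟩ := hT.isAcyclic.nonempty_star'_embedding TokenTree.root
    (f.trans TokenTree.tipVertex) fun i => TokenTree.root_adj_tipVertex (f i)
  let φ := tsCongr (Iso.map (Fintype.equivFin (TokenTree.Site k)) (TokenTree.tokenGraph k)) k
  exact ⟨_, _, φ.isTree_iff.mp hT, ⟨ψ.trans φ.toEmbedding⟩⟩
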